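/- For the two-qutrit GHZ state ψ = (|11⟩ + |22⟩ + |33⟩)/√3, the concurrence C(ψ) = √(2(1 − tr ρ₁²)) equals 2/√3, and the spin-1 CHSH parameter √2·|conj(α₁₁)α₂₂ + conj(α₂₂)α₃₃| with α_{ii} = 1/√3 equals √(8/9), which is strictly less than 1. -/

import Mathlib

/-- Coefficient matrix of the two-qutrit GHZ state `ψ = (|11⟩ + |22⟩ + |33⟩)/√3`. -/
noncomputable def ghzCoeff : Matrix (Fin 3) (Fin 3) ℂ :=
  Matrix.diagonal ![(Real.sqrt 3 : ℂ)⁻¹, (Real.sqrt 3 : ℂ)⁻¹, (Real.sqrt 3 : ℂ)⁻¹]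

/-- Reduced density matrix on the first factor: `ρ₁ i i' = ∑ j, ψ i j * conj (ψ i' j)`. -/
noncomputable def reducedState (ψ : Matrix (Fin 3) (Fin 3) ℂ) : Matrix (Fin 3) (Fin 3) ℂ :=
  fun i i' => ∑ j, ψ i j * (starRingEnd ℂ) (ψ i' j)

/-! All Schmidt coefficients of the GHZ state equal `1/√3`, so its coefficient matrix is the
scalar `(√3)⁻¹ • 1`. The reduced state is then the maximally mixed state `(1/3) • 1`, whose purity
`tr ρ₁²` is `1/3`; this gives the concurrence `√(4/3) = 2/√3`. The CHSH parameter is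
`√2 · 2 |1/√3|² = √2 · 2/3 = √(8/9)`. -/

open Matrix

lemma reducedState_eq_mul_conjTranspose (ψ : Matrix (Fin 3) (Fin 3) ℂ) :
    reducedState ψ = ψ * ψᴴ := by
  ext i i'
  simp [reducedState, mul_apply]

lemma reducedState_smul_one (c : ℂ) :
    reducedState (c • 1) = ((‖c‖ : ℂ) ^ 2) • 1 := by
  rw [reducedState_eq_mul_conjTranspose, conjTranspose_smul, conjTranspose_one, smul_mul_smul,
    Matrix.one_mul, Complex.star_def, Complex.mul_conj']

lemma norm_inv_ofReal_sqrt_sq {x : ℝ} (hx : 0 ≤ x) : ‖(Real.sqrt x : ℂ)⁻¹‖ ^ 2 = x⁻¹ := by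
  rw [norm_inv, Complex.norm_real, Real.norm_of_nonneg (Real.sqrt_nonneg x), inv_pow,
    Real.sq_sqrt hx]

lemma ghzCoeff_eq_smul_one : ghzCoeff = (Real.sqrt 3 : ℂ)⁻¹ • (1 : Matrix (Fin 3) (Fin 3) ℂ) := by
  rw [smul_one_eq_diagonal, ghzCoeff]
  congr 1
  ext i
  fin_cases i <;> rfl

lemma reducedState_ghzCoeff : reducedState ghzCoeff = ((3⁻¹ : ℝ) : ℂ) • 1 := by
  rw [ghzCoeff_eq_smul_one, reducedState_smul_one, ← Complex.ofReal_pow,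
    norm_inv_ofReal_sqrt_sq zero_le_three]

lemma trace_smul_one_mul_self {n : ℕ} (c : ℂ) :
    ((c • 1 : Matrix (Fin n) (Fin n) ℂ) * (c • 1)).trace = n * c ^ 2 := by
  rw [smul_mul_smul, Matrix.one_mul, trace_smul, trace_one, Fintype.card_fin, smul_eq_mul]
  ring

lemma purity_ghzCoeff : (reducedState ghzCoeff * reducedState ghzCoeff).trace.re = 3⁻¹ := by
  rw [reducedState_ghzCoeff, trace_smul_one_mul_self]
  norm_num

theorem ghz_concurrence_and_chsh_parameter :
    Real.sqrt (2 * (1 - (reducedState ghzCoeff * reducedState ghzCoeff).trace.re))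
      = 2 / Real.sqrt 3 ∧
    Real.sqrt 2 * ‖
        ((starRingEnd ℂ) (Real.sqrt 3 : ℂ)⁻¹ * (Real.sqrt 3 : ℂ)⁻¹ +
          (starRingEnd ℂ) (Real.sqrt 3 : ℂ)⁻¹ * (Real.sqrt 3 : ℂ)⁻¹)‖
      = Real.sqrt (8 / 9) ∧
    Real.sqrt (8 / 9) < 1 := by
  refine ⟨?concurrence, ?chsh, ?chsh_lt_one⟩
  case concurrence =>
    rw [purity_ghzCoeff, show 2 * (1 - 3⁻¹) = (2 : ℝ) ^ 2 / 3 by norm_num,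
      Real.sqrt_div' _ zero_le_three, Real.sqrt_sq zero_le_two]
  case chsh =>
    rw [Complex.conj_mul', ← two_mul, ← Complex.ofReal_pow, norm_inv_ofReal_sqrt_sq zero_le_three,
      show (8 / 9 : ℝ) = 2 * (2 * 3⁻¹) ^ 2 by norm_num, Real.sqrt_mul' _ (sq_nonneg _),
      Real.sqrt_sq (by norm_num)]
    norm_num
  case chsh_lt_one =>
    rw [Real.sqrt_lt' one_pos]
    norm_num
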